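/- arXiv:2201.03475 — 2 statements merged into one kernel-verified Lean document; each statement's English description precedes it below -/
import Mathlib

section
/- Let a, b, i be integers with 0 ≤ a < i < b ≤ m, and set λ = m+n−a−b. Suppose y = ∑_{j=m−i+1}^{m} α_j v_{j,m+n−i+1−j} ∈ D_{m+n−i} (with α_j ∈ F) satisfies N^{λ−1}(y) = x_{a+b+1−i}. Then N^{λ−1}( ∑_{j=m−i}^{m−1} α_{j+1} v_{j,m+n−i−j} ) = −x_{a+b−i}. -/
/-!
Let `R` be the row shift `v i j ↦ v (i - 1) j`. It commutes with `N = R + C` (where `C` is the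
column shift), it maps the element in the hypothesis onto the element in the conclusion, and it
maps `x k` to `-x (k - 1)`: shifting the alternating antidiagonal sum up by one row kills its
first term and flips the sign of all the others. Hence applying `R` to the hypothesis gives the
conclusion.
-/

open Finset

section RowShift

variable {F V : Type*} [Field F] [AddCommGroup V] [Module F V] {m n : ℕ} {v : ℤ → ℤ → V}
  (hv_indep : LinearIndependent F
    (fun p : Fin m × Fin n => v (((p.1 : ℕ) + 1 : ℕ) : ℤ) (((p.2 : ℕ) + 1 : ℕ) : ℤ)))
  (hv_span : Submodule.span F
    (Set.range (fun p : Fin m × Fin n =>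
      v (((p.1 : ℕ) + 1 : ℕ) : ℤ) (((p.2 : ℕ) + 1 : ℕ) : ℤ))) = ⊤)

def VanishesOffGrid (m n : ℕ) (v : ℤ → ℤ → V) : Prop :=
  ∀ i j : ℤ, (i < 1 ∨ (m : ℤ) < i ∨ j < 1 ∨ (n : ℤ) < j) → v i j = 0

noncomputable def gridBasis : Module.Basis (Fin m × Fin n) F V :=
  .mk hv_indep hv_span.ge

theorem gridBasis_apply (p : Fin m × Fin n) :
    gridBasis hv_indep hv_span p = v (((p.1 : ℕ) + 1 : ℕ) : ℤ) (((p.2 : ℕ) + 1 : ℕ) : ℤ) :=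
  Module.Basis.mk_apply _ _ _

noncomputable def rowShift : V →ₗ[F] V :=
  (gridBasis hv_indep hv_span).constr F fun p => v (p.1 : ℕ) (((p.2 : ℕ) + 1 : ℕ) : ℤ)

-- `I ≤ m` is needed because `v (m + 1) J = 0` while `v m J` need not vanish.
theorem rowShift_apply (hv0 : VanishesOffGrid m n v) {I : ℤ} (J : ℤ) (hI : I ≤ m) :
    rowShift hv_indep hv_span (v I J) = v (I - 1) J := by
  by_cases h : 1 ≤ I ∧ 1 ≤ J ∧ J ≤ n
  · obtain ⟨I', rfl⟩ : ∃ I' : ℕ, I = (I' + 1 : ℕ) := ⟨(I - 1).toNat, by omega⟩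
    obtain ⟨J', rfl⟩ : ∃ J' : ℕ, J = (J' + 1 : ℕ) := ⟨(J - 1).toNat, by omega⟩
    have hp := Module.Basis.constr_basis (gridBasis hv_indep hv_span) F
      (fun p => v (p.1 : ℕ) (((p.2 : ℕ) + 1 : ℕ) : ℤ)) (⟨I', by omega⟩, ⟨J', by omega⟩)
    rw [gridBasis_apply] at hp
    push_cast at hp ⊢
    rw [add_sub_cancel_right]
    exact hp
  · rw [hv0 I J (by omega), hv0 (I - 1) J (by omega), map_zero]

theorem map_v_eq_of_le (hv0 : VanishesOffGrid m n v) {N : V →ₗ[F] V}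
    (hN : ∀ i j : ℤ, 1 ≤ i → i ≤ (m : ℤ) → 1 ≤ j → j ≤ (n : ℤ) →
      N (v i j) = v (i - 1) j + v i (j - 1))
    {I J : ℤ} (hI : I ≤ m) (hJ : J ≤ n) : N (v I J) = v (I - 1) J + v I (J - 1) := by
  by_cases h : 1 ≤ I ∧ 1 ≤ J
  · exact hN I J h.1 hI h.2 hJ
  · rw [hv0 I J (by omega), hv0 (I - 1) J (by omega), hv0 I (J - 1) (by omega), map_zero,
      add_zero]

theorem rowShift_commute (hv0 : VanishesOffGrid m n v) {N : V →ₗ[F] V}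
    (hN : ∀ i j : ℤ, 1 ≤ i → i ≤ (m : ℤ) → 1 ≤ j → j ≤ (n : ℤ) →
      N (v i j) = v (i - 1) j + v i (j - 1)) :
    Commute (rowShift hv_indep hv_span) N := by
  refine (gridBasis hv_indep hv_span).ext fun p => ?_
  have hI : (((p.1 : ℕ) + 1 : ℕ) : ℤ) ≤ m := by have := p.1.2; omega
  have hJ : (((p.2 : ℕ) + 1 : ℕ) : ℤ) ≤ n := by have := p.2.2; omega
  rw [Module.End.mul_apply, Module.End.mul_apply, gridBasis_apply, map_v_eq_of_le hv0 hN hI hJ,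
    rowShift_apply hv_indep hv_span hv0 _ hI, map_v_eq_of_le hv0 hN (by omega) hJ, map_add,
    rowShift_apply hv_indep hv_span hv0 _ (by omega), rowShift_apply hv_indep hv_span hv0 _ hI]

theorem rowShift_sum_Icc (hv0 : VanishesOffGrid m n v) (f : ℤ → F) (lo hi c : ℤ)
    (hhi : hi ≤ m) :
    rowShift hv_indep hv_span (∑ j ∈ Icc lo hi, f j • v j (c + 1 - j)) =
      ∑ j ∈ Icc (lo - 1) (hi - 1), f (j + 1) • v j (c - j) := by
  have hIcc : Icc lo hi = (Icc (lo - 1) (hi - 1)).map (addRightEmbedding 1) := by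
    rw [map_add_right_Icc, sub_add_cancel, sub_add_cancel]
  rw [map_sum, hIcc, sum_map]
  refine sum_congr rfl fun j hj => ?_
  rw [mem_Icc] at hj
  rw [addRightEmbedding_apply, map_smul, rowShift_apply hv_indep hv_span hv0 _ (by omega),
    add_sub_cancel_right, show c + 1 - (j + 1) = c - j by ring]

theorem rowShift_alternating (hv0 : VanishesOffGrid m n v) {x : ℤ → V}
    (hx : ∀ k : ℤ, x k = ∑ j ∈ Icc (1 : ℤ) k, ((-1 : F) ^ (j - 1).toNat) • v j (k + 1 - j))
    {k : ℤ} (hk : k + 1 ≤ m) :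
    rowShift hv_indep hv_span (x (k + 1)) = -x k := by
  rw [hx, hx, rowShift_sum_Icc hv_indep hv_span hv0 _ _ _ _ hk, ← sum_neg_distrib]
  simp only [sub_self, add_sub_cancel_right]
  calc ∑ j ∈ Icc 0 k, (-1 : F) ^ j.toNat • v j (k + 1 - j)
      = ∑ j ∈ Icc 1 k, (-1 : F) ^ j.toNat • v j (k + 1 - j) := by
        refine (sum_subset (fun j => by simp only [mem_Icc]; omega) fun j hj hj' => ?_).symm
        simp only [mem_Icc] at hj hj'
        rw [hv0 j _ (by omega), smul_zero]
    _ = ∑ j ∈ Icc 1 k, -((-1 : F) ^ (j - 1).toNat • v j (k + 1 - j)) := by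
        refine sum_congr rfl fun j hj => ?_
        rw [mem_Icc] at hj
        rw [← neg_smul, show j.toNat = (j - 1).toNat + 1 by omega, pow_succ, mul_neg_one]

end RowShift

theorem stmt_16_general (F : Type*) [Field F] (m n : ℕ)
    (V : Type*) [AddCommGroup V] [Module F V]
    (v : ℤ → ℤ → V)
    (hv_indep : LinearIndependent F
      (fun p : Fin m × Fin n => v (((p.1 : ℕ) + 1 : ℕ) : ℤ) (((p.2 : ℕ) + 1 : ℕ) : ℤ)))
    (hv_span : Submodule.span F
      (Set.range (fun p : Fin m × Fin n =>
        v (((p.1 : ℕ) + 1 : ℕ) : ℤ) (((p.2 : ℕ) + 1 : ℕ) : ℤ))) = ⊤)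
    (hv0 : ∀ i j : ℤ, (i < 1 ∨ (m : ℤ) < i ∨ j < 1 ∨ (n : ℤ) < j) → v i j = 0)
    (N : V →ₗ[F] V)
    (hN : ∀ i j : ℤ, 1 ≤ i → i ≤ (m : ℤ) → 1 ≤ j → j ≤ (n : ℤ) →
      N (v i j) = v (i - 1) j + v i (j - 1))
    (x : ℤ → V)
    (hx : ∀ i : ℤ, x i =
      ∑ j ∈ Finset.Icc (1 : ℤ) i, ((-1 : F) ^ (j - 1).toNat) • v j (i + 1 - j))
    (a b i : ℕ) (hai : a < i) (hbm : b ≤ m)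
    (α : ℤ → F)
    (hy : (N ^ (m + n - a - b - 1))
        (∑ j ∈ Finset.Icc ((m : ℤ) - i + 1) (m : ℤ), α j • v j ((m : ℤ) + n - i + 1 - j)) =
      x ((a : ℤ) + b + 1 - i)) :
    (N ^ (m + n - a - b - 1))
        (∑ j ∈ Finset.Icc ((m : ℤ) - i) ((m : ℤ) - 1), α (j + 1) • v j ((m : ℤ) + n - i - j)) =
      -x ((a : ℤ) + b - i) := by
  have hcomm : Commute (rowShift hv_indep hv_span) (N ^ (m + n - a - b - 1)) :=
    (rowShift_commute hv_indep hv_span hv0 hN).pow_right _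
  have hRy :=
    rowShift_sum_Icc hv_indep hv_span hv0 α ((m : ℤ) - i + 1) m ((m : ℤ) + n - i) le_rfl
  rw [add_sub_cancel_right] at hRy
  rw [← hRy, ← Module.End.mul_apply, ← hcomm.eq, Module.End.mul_apply, hy,
    show (a : ℤ) + b + 1 - i = (a + b - i) + 1 by ring,
    rowShift_alternating hv_indep hv_span hv0 hx (by omega)]

/-- Let 0 ≤ a < i < b ≤ m and λ = m+n−a−b. If
y = ∑_{j=m−i+1}^{m} α_j v_{j,m+n−i+1−j} ∈ D_{m+n−i} satisfies N^{λ−1}(y) = x_{a+b+1−i},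
then N^{λ−1}(∑_{j=m−i}^{m−1} α_{j+1} v_{j,m+n−i−j}) = −x_{a+b−i}. -/
theorem stmt_16 (F : Type*) [Field F] (m n : ℕ) (hm : 0 < m) (hmn : m ≤ n)
    (V : Type*) [AddCommGroup V] [Module F V]
    (v : ℤ → ℤ → V)
    (hv_indep : LinearIndependent F
      (fun p : Fin m × Fin n => v (((p.1 : ℕ) + 1 : ℕ) : ℤ) (((p.2 : ℕ) + 1 : ℕ) : ℤ)))
    (hv_span : Submodule.span F
      (Set.range (fun p : Fin m × Fin n =>
        v (((p.1 : ℕ) + 1 : ℕ) : ℤ) (((p.2 : ℕ) + 1 : ℕ) : ℤ))) = ⊤)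
    (hv0 : ∀ i j : ℤ, (i < 1 ∨ (m : ℤ) < i ∨ j < 1 ∨ (n : ℤ) < j) → v i j = 0)
    (N : V →ₗ[F] V)
    (hN : ∀ i j : ℤ, 1 ≤ i → i ≤ (m : ℤ) → 1 ≤ j → j ≤ (n : ℤ) →
      N (v i j) = v (i - 1) j + v i (j - 1))
    (D : ℤ → Submodule F V)
    (hD : ∀ k : ℤ, D k = Submodule.span F
      {z | ∃ i j : ℤ, 1 ≤ i ∧ i ≤ (m : ℤ) ∧ 1 ≤ j ∧ j ≤ (n : ℤ) ∧ i + j = k + 1 ∧ z = v i j})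
    (x : ℤ → V)
    (hx : ∀ i : ℤ, x i =
      ∑ j ∈ Finset.Icc (1 : ℤ) i, ((-1 : F) ^ (j - 1).toNat) • v j (i + 1 - j))
    (a b i : ℕ) (hai : a < i) (hib : i < b) (hbm : b ≤ m)
    (α : ℤ → F)
    (hy : (N ^ (m + n - a - b - 1))
        (∑ j ∈ Finset.Icc ((m : ℤ) - i + 1) (m : ℤ), α j • v j ((m : ℤ) + n - i + 1 - j)) =
      x ((a : ℤ) + b + 1 - i)) :
    (N ^ (m + n - a - b - 1))
        (∑ j ∈ Finset.Icc ((m : ℤ) - i) ((m : ℤ) - 1), α (j + 1) • v j ((m : ℤ) + n - i - j)) =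
      -x ((a : ℤ) + b - i) :=
  stmt_16_general F m n V v hv_indep hv_span hv0 N hN x hx a b i hai hbm α hy
end

section
/- Let a and b be integers with 0 ≤ a < b ≤ m, and set λ = m+n−a−b. Then N^{λ−1} maps D_{m+n−a−1} into D_b; suppose this restriction N^{λ−1} : D_{m+n−a−1} → D_b is injective. Then the kernel of the restriction of N^{λ} to D_{m+n−a−1} has dimension at most 1 over F; moreover, if y ∈ D_{m+n−a−1} satisfies N^{λ−1}(y) = x_b, then this kernel equals span{y}. -/
/-!
An element of `D_{m+n-a-1}` killed by `N^λ` is sent by `N^{λ-1}` into `D_b ∩ ker N`. Writing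
`z = ∑_{j<b} c_j v_{j+1,b-j}`, the equation `N z = 0` says `c_j + c_{j+1} = 0` by linear
independence of the next diagonal, so `D_b ∩ ker N` is the line spanned by the alternating vector
`x_b`. Since `N^{λ-1}` is injective on `D_{m+n-a-1}`, the kernel of `N^λ` there embeds into that
line, and it is `span {y}` as soon as `N^{λ-1} y = x_b`.
-/

open Submodule Module Finset

section Abstract

variable {F U V W : Type*} [Field F] [AddCommGroup U] [Module F U] [AddCommGroup V] [Module F V]
  [AddCommGroup W] [Module F W] {f : U →ₗ[F] V} {g : V →ₗ[F] W} {P : Submodule F U}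
  {R : Submodule F V} {w : V}

theorem apply_mem_span_singleton_of_mem_inf_ker (hPR : ∀ z ∈ P, f z ∈ R)
    (hR : ∀ z ∈ R, g z = 0 → z ∈ span F {w}) {z : U} (hz : z ∈ P ⊓ LinearMap.ker (g ∘ₗ f)) :
    f z ∈ span F {w} :=
  hR _ (hPR z hz.1) hz.2

theorem finrank_inf_ker_comp_le_one (hPR : ∀ z ∈ P, f z ∈ R) (hf : Set.InjOn f P)
    (hR : ∀ z ∈ R, g z = 0 → z ∈ span F {w}) :
    finrank F ↥(P ⊓ LinearMap.ker (g ∘ₗ f)) ≤ 1 := by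
  let φ : ↥(P ⊓ LinearMap.ker (g ∘ₗ f)) →ₗ[F] span F {w} :=
    (f.domRestrict _).codRestrict _ fun z ↦ apply_mem_span_singleton_of_mem_inf_ker hPR hR z.2
  have hφ : Function.Injective φ := fun z₁ z₂ h ↦
    Subtype.ext (hf z₁.2.1 z₂.2.1 (congrArg Subtype.val h))
  calc finrank F ↥(P ⊓ LinearMap.ker (g ∘ₗ f)) ≤ finrank F (span F {w}) :=
        LinearMap.finrank_le_finrank_of_injective hφ
    _ ≤ 1 := by simpa using finrank_span_le_card (R := F) ({w} : Set V)

theorem inf_ker_comp_eq_span_singleton (hPR : ∀ z ∈ P, f z ∈ R) (hf : Set.InjOn f P)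
    (hR : ∀ z ∈ R, g z = 0 → z ∈ span F {w}) {y : U} (hy : y ∈ P) (hfy : f y = w)
    (hgw : g w = 0) : P ⊓ LinearMap.ker (g ∘ₗ f) = span F {y} := by
  refine le_antisymm (fun z hz ↦ ?_) ((span_singleton_le_iff_mem _ _).2 ⟨hy, by simp [hfy, hgw]⟩)
  obtain ⟨c, hc⟩ := mem_span_singleton.1 (apply_mem_span_singleton_of_mem_inf_ker hPR hR hz)
  have : c • y = z := hf (P.smul_mem c hy) hz.1 (by rw [map_smul, hfy, hc])
  exact mem_span_singleton.2 ⟨c, this⟩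

end Abstract

section Grid

variable (F : Type*) {V : Type*} [Field F] [AddCommGroup V] [Module F V]

def diagSpan (m n : ℕ) (v : ℤ → ℤ → V) (k : ℤ) : Submodule F V :=
  span F {z | ∃ i j : ℤ, 1 ≤ i ∧ i ≤ (m : ℤ) ∧ 1 ≤ j ∧ j ≤ (n : ℤ) ∧ i + j = k + 1 ∧ z = v i j}

def diagSum (v : ℤ → ℤ → V) (k : ℕ) : (ℕ → F) →ₗ[F] V where
  toFun c := ∑ j ∈ range k, c j • v ((j : ℤ) + 1) ((k : ℤ) - j)
  map_add' c c' := by simp [add_smul, sum_add_distrib]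
  map_smul' a c := by simp [smul_sum, smul_smul]

variable {F} {m n : ℕ} {v : ℤ → ℤ → V}

theorem diagSum_apply (k : ℕ) (c : ℕ → F) :
    diagSum F v k c = ∑ j ∈ range k, c j • v ((j : ℤ) + 1) ((k : ℤ) - j) := rfl

theorem diagSum_congr {k : ℕ} {c c' : ℕ → F} (h : ∀ j < k, c j = c' j) :
    diagSum F v k c = diagSum F v k c' := by
  simp only [diagSum_apply]
  exact sum_congr rfl fun j hj ↦ by rw [h j (mem_range.1 hj)]

theorem v_mem_diagSpan (hv0 : ∀ i j : ℤ, (i < 1 ∨ (m : ℤ) < i ∨ j < 1 ∨ (n : ℤ) < j) → v i j = 0)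
    (i j : ℤ) : v i j ∈ diagSpan F m n v (i + j - 1) := by
  by_cases h : 1 ≤ i ∧ i ≤ (m : ℤ) ∧ 1 ≤ j ∧ j ≤ (n : ℤ)
  · exact subset_span ⟨i, j, h.1, h.2.1, h.2.2.1, h.2.2.2, by ring, rfl⟩
  · rw [hv0 i j (by omega)]
    exact zero_mem _

theorem diagSpan_le_range_diagSum (k : ℕ) :
    diagSpan F m n v k ≤ LinearMap.range (diagSum F v k) := by
  refine span_le.2 ?_
  rintro _ ⟨i, j, hi1, him, hj1, hjn, hij, rfl⟩
  refine ⟨fun t ↦ if t = (i - 1).toNat then 1 else 0, ?_⟩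
  have hmem : (i - 1).toNat ∈ range k := mem_range.2 (by omega)
  simp only [diagSum_apply, ite_smul, one_smul, zero_smul, sum_ite_eq', hmem, if_true]
  congr 1 <;> omega

theorem apply_mem_diagSpan
    (hv0 : ∀ i j : ℤ, (i < 1 ∨ (m : ℤ) < i ∨ j < 1 ∨ (n : ℤ) < j) → v i j = 0)
    {N : V →ₗ[F] V}
    (hN : ∀ i j : ℤ, 1 ≤ i → i ≤ (m : ℤ) → 1 ≤ j → j ≤ (n : ℤ) →
      N (v i j) = v (i - 1) j + v i (j - 1))
    {k : ℤ} {z : V} (hz : z ∈ diagSpan F m n v k) : N z ∈ diagSpan F m n v (k - 1) := by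
  refine (span_le (p := (diagSpan F m n v (k - 1)).comap N)).2 ?_ hz
  rintro _ ⟨i, j, hi1, him, hj1, hjn, hij, rfl⟩
  rw [SetLike.mem_coe, mem_comap, hN i j hi1 him hj1 hjn]
  have hk : k - 1 = i - 1 + j - 1 := by omega
  have hk' : k - 1 = i + (j - 1) - 1 := by omega
  exact add_mem (hk ▸ v_mem_diagSpan hv0 _ _) (hk' ▸ v_mem_diagSpan hv0 _ _)

theorem pow_apply_mem_diagSpan
    (hv0 : ∀ i j : ℤ, (i < 1 ∨ (m : ℤ) < i ∨ j < 1 ∨ (n : ℤ) < j) → v i j = 0)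
    {N : V →ₗ[F] V}
    (hN : ∀ i j : ℤ, 1 ≤ i → i ≤ (m : ℤ) → 1 ≤ j → j ≤ (n : ℤ) →
      N (v i j) = v (i - 1) j + v i (j - 1))
    (t : ℕ) {k : ℤ} {z : V} (hz : z ∈ diagSpan F m n v k) :
    (N ^ t) z ∈ diagSpan F m n v (k - t) := by
  induction t with
  | zero => simpa using hz
  | succ t ih =>
    rw [pow_succ', Module.End.mul_apply, Nat.cast_succ, ← sub_sub]
    exact apply_mem_diagSpan hv0 hN ih

theorem apply_diagSum
    (hv0 : ∀ i j : ℤ, (i < 1 ∨ (m : ℤ) < i ∨ j < 1 ∨ (n : ℤ) < j) → v i j = 0)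
    {N : V →ₗ[F] V}
    (hN : ∀ i j : ℤ, 1 ≤ i → i ≤ (m : ℤ) → 1 ≤ j → j ≤ (n : ℤ) →
      N (v i j) = v (i - 1) j + v i (j - 1))
    {k : ℕ} (hkm : k + 1 ≤ m) (hkn : k + 1 ≤ n) (c : ℕ → F) :
    N (diagSum F v (k + 1) c) = diagSum F v k fun j ↦ c j + c (j + 1) := by
  have hstep : ∀ j ∈ range (k + 1), N (c j • v ((j : ℤ) + 1) (((k + 1 : ℕ) : ℤ) - j)) =
      c j • v j ((k : ℤ) + 1 - j) + c j • v ((j : ℤ) + 1) ((k : ℤ) - j) := by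
    intro j hj
    rw [mem_range] at hj
    rw [map_smul, hN _ _ (by omega) (by omega) (by omega) (by omega), add_sub_cancel_right,
      Nat.cast_succ, show (k : ℤ) + 1 - j - 1 = k - j by ring, smul_add]
  rw [diagSum_apply, map_sum, sum_congr rfl hstep, sum_add_distrib, sum_range_succ',
    sum_range_succ _ k, hv0 _ _ (by omega), hv0 _ _ (by omega)]
  simp only [smul_zero, add_zero]
  rw [diagSum_apply, ← sum_add_distrib]
  refine sum_congr rfl fun j _ ↦ ?_
  rw [add_smul, add_comm]
  congr 3
  push_cast
  ring

theorem eq_zero_of_diagSum_eq_zero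
    (hv_indep : LinearIndependent F
      (fun p : Fin m × Fin n => v (((p.1 : ℕ) + 1 : ℕ) : ℤ) (((p.2 : ℕ) + 1 : ℕ) : ℤ)))
    {k : ℕ} (hkm : k ≤ m) (hkn : k ≤ n) {c : ℕ → F} (h : diagSum F v k c = 0) :
    ∀ j < k, c j = 0 := by
  have hli := hv_indep.comp
    (fun i : Fin k ↦ ((⟨i, by omega⟩ : Fin m), (⟨k - 1 - i, by omega⟩ : Fin n)))
    fun p q h ↦ Fin.ext (congrArg (fun r : Fin m × Fin n ↦ (r.1 : ℕ)) h)
  refine fun j hj ↦ Fintype.linearIndependent_iff.1 hli (fun i ↦ c i) ?_ ⟨j, hj⟩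
  rw [← h, diagSum_apply,
    ← Fin.sum_univ_eq_sum_range (fun i ↦ c i • v ((i : ℤ) + 1) ((k : ℤ) - i))]
  refine sum_congr rfl fun i _ ↦ ?_
  simp only [Function.comp_apply]
  congr 2; omega

theorem sum_Icc_alternating_eq_diagSum (k : ℕ) :
    ∑ j ∈ Icc (1 : ℤ) k, ((-1 : F) ^ (j - 1).toNat) • v j (k + 1 - j) =
      diagSum F v k fun j ↦ (-1) ^ j := by
  rw [diagSum_apply]
  symm
  refine sum_nbij' (fun j : ℕ ↦ (j : ℤ) + 1) (fun j ↦ (j - 1).toNat) ?_ ?_ ?_ ?_ ?_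
  all_goals intro j hj
  all_goals simp only [mem_Icc, mem_range] at hj
  · simp only [mem_Icc]; omega
  · simp only [mem_range]; omega
  · omega
  · omega
  · rw [add_sub_cancel_right, Int.toNat_natCast, add_sub_add_right_eq_sub]

theorem apply_alternating_diagSum
    (hv0 : ∀ i j : ℤ, (i < 1 ∨ (m : ℤ) < i ∨ j < 1 ∨ (n : ℤ) < j) → v i j = 0)
    {N : V →ₗ[F] V}
    (hN : ∀ i j : ℤ, 1 ≤ i → i ≤ (m : ℤ) → 1 ≤ j → j ≤ (n : ℤ) →
      N (v i j) = v (i - 1) j + v i (j - 1))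
    {k : ℕ} (hkm : k + 1 ≤ m) (hkn : k + 1 ≤ n) :
    N (diagSum F v (k + 1) fun j ↦ (-1) ^ j) = 0 := by
  have hcancel : (fun j : ℕ ↦ (-1 : F) ^ j + (-1) ^ (j + 1)) = 0 :=
    funext fun j ↦ by simp [pow_succ]
  rw [apply_diagSum hv0 hN hkm hkn, hcancel, map_zero]

theorem mem_span_alternating_diagSum_of_apply_eq_zero
    (hv_indep : LinearIndependent F
      (fun p : Fin m × Fin n => v (((p.1 : ℕ) + 1 : ℕ) : ℤ) (((p.2 : ℕ) + 1 : ℕ) : ℤ)))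
    (hv0 : ∀ i j : ℤ, (i < 1 ∨ (m : ℤ) < i ∨ j < 1 ∨ (n : ℤ) < j) → v i j = 0)
    {N : V →ₗ[F] V}
    (hN : ∀ i j : ℤ, 1 ≤ i → i ≤ (m : ℤ) → 1 ≤ j → j ≤ (n : ℤ) →
      N (v i j) = v (i - 1) j + v i (j - 1))
    {k : ℕ} (hkm : k + 1 ≤ m) (hkn : k + 1 ≤ n) {z : V}
    (hz : z ∈ diagSpan F m n v (k + 1 : ℕ)) (hNz : N z = 0) :
    z ∈ span F {diagSum F v (k + 1) fun j ↦ (-1) ^ j} := by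
  obtain ⟨c, rfl⟩ := diagSpan_le_range_diagSum (k + 1) hz
  have hc : ∀ j < k, c j + c (j + 1) = 0 := eq_zero_of_diagSum_eq_zero hv_indep (by omega)
    (by omega) ((apply_diagSum hv0 hN hkm hkn c).symm.trans hNz)
  have halt : ∀ j < k + 1, c j = c 0 * (-1) ^ j := by
    intro j hj
    induction j with
    | zero => simp
    | succ j ih =>
      rw [eq_neg_of_add_eq_zero_right (hc j (by omega)), ih (by omega), pow_succ]
      ring
  refine mem_span_singleton.2 ⟨c 0, ?_⟩
  rw [← map_smul]
  exact diagSum_congr fun j hj ↦ (halt j hj).symm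

end Grid

theorem stmt_19_general (F : Type*) [Field F] (m n : ℕ) (hmn : m ≤ n)
    (V : Type*) [AddCommGroup V] [Module F V]
    (v : ℤ → ℤ → V)
    (hv_indep : LinearIndependent F
      (fun p : Fin m × Fin n => v (((p.1 : ℕ) + 1 : ℕ) : ℤ) (((p.2 : ℕ) + 1 : ℕ) : ℤ)))
    (hv0 : ∀ i j : ℤ, (i < 1 ∨ (m : ℤ) < i ∨ j < 1 ∨ (n : ℤ) < j) → v i j = 0)
    (N : V →ₗ[F] V)
    (hN : ∀ i j : ℤ, 1 ≤ i → i ≤ (m : ℤ) → 1 ≤ j → j ≤ (n : ℤ) →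
      N (v i j) = v (i - 1) j + v i (j - 1))
    (D : ℤ → Submodule F V)
    (hD : ∀ k : ℤ, D k = Submodule.span F
      {z | ∃ i j : ℤ, 1 ≤ i ∧ i ≤ (m : ℤ) ∧ 1 ≤ j ∧ j ≤ (n : ℤ) ∧ i + j = k + 1 ∧ z = v i j})
    (x : ℤ → V)
    (hx : ∀ i : ℤ, x i =
      ∑ j ∈ Finset.Icc (1 : ℤ) i, ((-1 : F) ^ (j - 1).toNat) • v j (i + 1 - j))
    (a b : ℕ) (hab : a < b) (hbm : b ≤ m)
    (hinj : ∀ z₁ ∈ D ((m : ℤ) + n - a - 1), ∀ z₂ ∈ D ((m : ℤ) + n - a - 1),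
      (N ^ (m + n - a - b - 1)) z₁ = (N ^ (m + n - a - b - 1)) z₂ → z₁ = z₂) :
    (∀ z ∈ D ((m : ℤ) + n - a - 1), (N ^ (m + n - a - b - 1)) z ∈ D ((b : ℤ))) ∧
      Module.finrank F
        ↥(D ((m : ℤ) + n - a - 1) ⊓ LinearMap.ker (N ^ (m + n - a - b))) ≤ 1 ∧
      (∀ y ∈ D ((m : ℤ) + n - a - 1), (N ^ (m + n - a - b - 1)) y = x ((b : ℤ)) →
        D ((m : ℤ) + n - a - 1) ⊓ LinearMap.ker (N ^ (m + n - a - b)) =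
          Submodule.span F {y}) := by
  obtain rfl : D = diagSpan F m n v := funext hD
  obtain ⟨k, rfl⟩ : ∃ k, b = k + 1 := ⟨b - 1, by omega⟩
  set l := m + n - a - (k + 1) - 1
  have hmaps : ∀ z ∈ diagSpan F m n v ((m : ℤ) + n - a - 1),
      (N ^ l) z ∈ diagSpan F m n v ((k + 1 : ℕ) : ℤ) := fun z hz ↦ by
    have h := pow_apply_mem_diagSpan hv0 hN l hz
    rwa [show (m : ℤ) + n - a - 1 - l = ((k + 1 : ℕ) : ℤ) by omega] at h
  have hinj' : Set.InjOn (N ^ l) (diagSpan F m n v ((m : ℤ) + n - a - 1)) :=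
    fun z₁ h₁ z₂ h₂ ↦ hinj z₁ h₁ z₂ h₂
  have hxk : x ((k + 1 : ℕ) : ℤ) = diagSum F v (k + 1) fun j ↦ (-1) ^ j :=
    (hx _).trans (sum_Icc_alternating_eq_diagSum _)
  have hker : ∀ z ∈ diagSpan F m n v ((k + 1 : ℕ) : ℤ), N z = 0 →
      z ∈ span F {x ((k + 1 : ℕ) : ℤ)} := fun z hz hNz ↦ hxk ▸
    mem_span_alternating_diagSum_of_apply_eq_zero hv_indep hv0 hN hbm (by omega) hz hNz
  have hpow : N ^ (m + n - a - (k + 1)) = N ∘ₗ N ^ l := by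
    rw [← Module.End.mul_eq_comp, ← pow_succ']
    congr 1
    omega
  refine ⟨hmaps, ?_, fun y hy hyx ↦ ?_⟩ <;> rw [hpow]
  · exact finrank_inf_ker_comp_le_one hmaps hinj' hker
  · exact inf_ker_comp_eq_span_singleton hmaps hinj' hker hy hyx
      (hxk ▸ apply_alternating_diagSum hv0 hN hbm (by omega))

/-- Let 0 ≤ a < b ≤ m, λ = m+n−a−b. Then N^{λ−1} maps D_{m+n−a−1} into D_b;
if this restriction is injective, then the kernel of the restriction of N^{λ} to
D_{m+n−a−1} has dimension at most 1; moreover if y ∈ D_{m+n−a−1} satisfies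
N^{λ−1}(y) = x_b, then this kernel equals span{y}. -/
theorem stmt_19 (F : Type*) [Field F] (m n : ℕ) (hm : 0 < m) (hmn : m ≤ n)
    (V : Type*) [AddCommGroup V] [Module F V]
    (v : ℤ → ℤ → V)
    (hv_indep : LinearIndependent F
      (fun p : Fin m × Fin n => v (((p.1 : ℕ) + 1 : ℕ) : ℤ) (((p.2 : ℕ) + 1 : ℕ) : ℤ)))
    (hv_span : Submodule.span F
      (Set.range (fun p : Fin m × Fin n =>
        v (((p.1 : ℕ) + 1 : ℕ) : ℤ) (((p.2 : ℕ) + 1 : ℕ) : ℤ))) = ⊤)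
    (hv0 : ∀ i j : ℤ, (i < 1 ∨ (m : ℤ) < i ∨ j < 1 ∨ (n : ℤ) < j) → v i j = 0)
    (N : V →ₗ[F] V)
    (hN : ∀ i j : ℤ, 1 ≤ i → i ≤ (m : ℤ) → 1 ≤ j → j ≤ (n : ℤ) →
      N (v i j) = v (i - 1) j + v i (j - 1))
    (D : ℤ → Submodule F V)
    (hD : ∀ k : ℤ, D k = Submodule.span F
      {z | ∃ i j : ℤ, 1 ≤ i ∧ i ≤ (m : ℤ) ∧ 1 ≤ j ∧ j ≤ (n : ℤ) ∧ i + j = k + 1 ∧ z = v i j})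
    (x : ℤ → V)
    (hx : ∀ i : ℤ, x i =
      ∑ j ∈ Finset.Icc (1 : ℤ) i, ((-1 : F) ^ (j - 1).toNat) • v j (i + 1 - j))
    (a b : ℕ) (hab : a < b) (hbm : b ≤ m)
    (hinj : ∀ z₁ ∈ D ((m : ℤ) + n - a - 1), ∀ z₂ ∈ D ((m : ℤ) + n - a - 1),
      (N ^ (m + n - a - b - 1)) z₁ = (N ^ (m + n - a - b - 1)) z₂ → z₁ = z₂) :
    (∀ z ∈ D ((m : ℤ) + n - a - 1), (N ^ (m + n - a - b - 1)) z ∈ D ((b : ℤ))) ∧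
      Module.finrank F
        ↥(D ((m : ℤ) + n - a - 1) ⊓ LinearMap.ker (N ^ (m + n - a - b))) ≤ 1 ∧
      (∀ y ∈ D ((m : ℤ) + n - a - 1), (N ^ (m + n - a - b - 1)) y = x ((b : ℤ)) →
        D ((m : ℤ) + n - a - 1) ⊓ LinearMap.ker (N ^ (m + n - a - b)) =
          Submodule.span F {y}) :=
  stmt_19_general F m n hmn V v hv_indep hv0 N hN D hD x hx a b hab hbm hinj
end
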